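/- arXiv:1311.4734 — 4 statements merged into one kernel-verified Lean document; each statement's English description precedes it below -/
import Mathlib

section
/- If a_n and a_{n+1} are positive integers of different parity with a_n < a_{n+1}, then the Morse block M_{a_{n+1}} ends with the block \overline{M_{a_n}} (the binary complement of M_{a_n}). -/
open Filter

/-- Metric on Σ₂ = {0,1}^ℕ : d(u,v) = Σ_{i≥1} δ(u_i,v_i)/2^i (coordinates 0-indexed). -/
noncomputable def dist2 (u v : ℕ → Bool) : ℝ :=
  ∑' i : ℕ, if u i = v i then 0 else (1/2)^(i+1)

/-- The shift map. -/
def shift (u : ℕ → Bool) : ℕ → Bool := fun n => u (n + 1)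

/-- Binary complement of a word. -/
def wordCompl (B : List Bool) : List Bool := B.map (fun b => !b)

/-- Morse blocks: M_0 = 0, M_{i+1} = M_i followed by its complement. -/
def morseBlock : ℕ → List Bool
  | 0 => [false]
  | i + 1 => morseBlock i ++ wordCompl (morseBlock i)

/-- The Morse sequence, the limit of the Morse blocks. -/
def morse : ℕ → Bool := fun n => (morseBlock (n + 1)).getD n false

open Classical in
/-- Infinite concatenation of a sequence of (nonempty) blocks. -/
noncomputable def concatSeq (B : ℕ → List Bool) (k : ℕ) : Bool :=
  if h : ∃ n, ∑ i ∈ Finset.range n, (B i).length ≤ k ∧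
      k < ∑ i ∈ Finset.range (n + 1), (B i).length then
    (B h.choose).getD (k - ∑ i ∈ Finset.range h.choose, (B i).length) false
  else false

open Classical in
/-- Lower distributional function. -/
noncomputable def Phi (x y : ℕ → Bool) (δ : ℝ) : ℝ :=
  liminf (fun m : ℕ =>
    (((Finset.Ioo 0 m).filter (fun k => dist2 (shift^[k] x) (shift^[k] y) < δ)).card : ℝ) / m)
    atTop

open Classical in
/-- Upper distributional function. -/
noncomputable def PhiStar (x y : ℕ → Bool) (ε : ℝ) : ℝ :=
  limsup (fun m : ℕ =>
    (((Finset.Ioo 0 m).filter (fun k => dist2 (shift^[k] x) (shift^[k] y) < ε)).card : ℝ) / m)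
    atTop

/-- A Li-Yorke scrambled triple. -/
noncomputable def ScrTriple (x y z : ℕ → Bool) : Prop :=
  x ≠ y ∧ x ≠ z ∧ y ≠ z ∧
  liminf (fun k : ℕ => max (max (dist2 (shift^[k] x) (shift^[k] y))
      (dist2 (shift^[k] x) (shift^[k] z))) (dist2 (shift^[k] y) (shift^[k] z))) atTop = 0 ∧
  0 < limsup (fun k : ℕ => min (min (dist2 (shift^[k] x) (shift^[k] y))
      (dist2 (shift^[k] x) (shift^[k] z))) (dist2 (shift^[k] y) (shift^[k] z))) atTop

/-- Concatenation of Morse blocks M_{a j}, complemented where `e j = true`. -/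
noncomputable def blockPt (a : ℕ → ℕ) (e : ℕ → Bool) : ℕ → Bool :=
  concatSeq (fun j => if e j then wordCompl (morseBlock (a j)) else morseBlock (a j))

/-- A point occurring as in Theorem 2: odd-position blocks fixed, even-position blocks chosen by α. -/
noncomputable def xpt (a : ℕ → ℕ) (α : ℕ → Bool) : ℕ → Bool :=
  blockPt a (fun j => if j % 2 = 0 then α (j / 2) else false)

/-- Cantor set predicate. -/
def IsCantorSet (C : Set (ℕ → Bool)) : Prop :=
  C.Nonempty ∧ IsCompact C ∧ Perfect C ∧ IsTotallyDisconnected C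

/-- The Morse minimal set: orbit closure of the Morse sequence. -/
def morseMinimal : Set (ℕ → Bool) := closure {y | ∃ k : ℕ, y = shift^[k] morse}

/-!
`M_{i+2} = M_i \overline{M_i} \overline{M_i} M_i` ends with `M_i`, so `M_i` is a suffix of every
`M_{i+2k}`; since `M_{a+1}` ends with `\overline{M_a}`, so does every `M_b` with `b > a` of the
other parity.
-/

lemma wordCompl_append (l l' : List Bool) :
    wordCompl (l ++ l') = wordCompl l ++ wordCompl l' :=
  List.map_append

@[simp]
lemma wordCompl_wordCompl (l : List Bool) : wordCompl (wordCompl l) = l := by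
  simp [wordCompl, Function.comp_def]

lemma morseBlock_add_two (i : ℕ) :
    morseBlock (i + 2) = morseBlock (i + 1) ++ wordCompl (morseBlock i) ++ morseBlock i := by
  rw [morseBlock, morseBlock, wordCompl_append, wordCompl_wordCompl]
  simp only [List.append_assoc]

lemma wordCompl_morseBlock_suffix_succ (i : ℕ) :
    wordCompl (morseBlock i) <:+ morseBlock (i + 1) :=
  List.suffix_append _ _

lemma morseBlock_suffix_add_two (i : ℕ) : morseBlock i <:+ morseBlock (i + 2) := by
  rw [morseBlock_add_two]
  exact List.suffix_append _ _

lemma morseBlock_suffix_add_two_mul (i k : ℕ) : morseBlock i <:+ morseBlock (i + 2 * k) := by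
  induction k with
  | zero => exact List.suffix_refl _
  | succ k ih => exact ih.trans (morseBlock_suffix_add_two (i + 2 * k))

theorem stmt1_general (a b : ℕ) (hab : a < b) (hpar : a % 2 ≠ b % 2) :
    wordCompl (morseBlock a) <:+ morseBlock b := by
  obtain ⟨k, rfl⟩ : ∃ k, b = a + 1 + 2 * k := ⟨(b - a - 1) / 2, by omega⟩
  exact (wordCompl_morseBlock_suffix_succ a).trans (morseBlock_suffix_add_two_mul (a + 1) k)

theorem stmt1 (a b : ℕ) (ha : 0 < a) (hab : a < b) (hpar : a % 2 ≠ b % 2) :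
    wordCompl (morseBlock a) <:+ morseBlock b :=
  stmt1_general a b hab hpar
end

section
/- For every strictly increasing sequence {a_i} of positive integers with a_n ≡ n (mod 2) for all n ≥ 1, and for every n > 1, the shift of the Morse sequence σ^{r_n}(m), where r_n = 3·2^{a_n} − Σ_{i=1}^{n−1} 2^{a_i}, begins with the block M_{a_1} M_{a_2} ... M_{a_n}. -/
/-!
Let `t n = thueMorse n` be the parity of the binary digit sum of `n`. Then
`M_i = t 0 … t (2^i - 1)`, the Morse sequence is `t` itself, and `t (q * 2^i + p) = t q xor t p`
for `p < 2^i`; hence `M_i` occurs in `m` at every position `q * 2^i` with `t q = 0`.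

Index the exponents from `0` and put `N = n - 1`. The block `M_{a j}` has to start at
`x j = r_n + ∑_{i<j} 2^{a i}`, and `x N = 3 * 2^{a N}`. Going down, `x j = x (j+1) - 2^{a j}`, so
`x j = q j * 2^{a j}` with `q N = 3` and `q j = 2^{a (j+1) - a j} * q (j+1) - 1`. The gaps
`a (j+1) - a j` are odd by the parity condition, and for odd `d` and odd `q` one has
`t (2^d * q - 1) = t q`; so every `q j` is odd with `t (q j) = t 3 = 0`.
-/

open Filter

open Finset

def thueMorse (n : ℕ) : Bool :=
  Nat.evenOddRec (P := fun _ => Bool) false (fun _ b => b) (fun _ b => !b) n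

@[simp]
lemma thueMorse_zero : thueMorse 0 = false := Nat.evenOddRec_zero ..

@[simp]
lemma thueMorse_two_mul (n : ℕ) : thueMorse (2 * n) = thueMorse n :=
  Nat.evenOddRec_even _ _ _ rfl n

@[simp]
lemma thueMorse_two_mul_add_one (n : ℕ) : thueMorse (2 * n + 1) = !thueMorse n :=
  Nat.evenOddRec_odd _ _ _ rfl n

@[simp]
lemma thueMorse_one : thueMorse 1 = true := by simpa using thueMorse_two_mul_add_one 0

lemma thueMorse_mul_two_pow_add (q : ℕ) {i p : ℕ} (hp : p < 2 ^ i) :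
    thueMorse (q * 2 ^ i + p) = (thueMorse q ^^ thueMorse p) := by
  induction i generalizing p with
  | zero =>
    obtain rfl : p = 0 := by omega
    simp
  | succ i ih =>
    obtain ⟨p, rfl | rfl⟩ := Nat.even_or_odd' p
    · rw [show q * 2 ^ (i + 1) + 2 * p = 2 * (q * 2 ^ i + p) by ring,
        thueMorse_two_mul, thueMorse_two_mul, ih (by omega)]
    · rw [show q * 2 ^ (i + 1) + (2 * p + 1) = 2 * (q * 2 ^ i + p) + 1 by ring,
        thueMorse_two_mul_add_one, thueMorse_two_mul_add_one, ih (by omega), Bool.xor_not]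

lemma thueMorse_two_pow_add {i p : ℕ} (hp : p < 2 ^ i) :
    thueMorse (2 ^ i + p) = !thueMorse p := by
  simpa using thueMorse_mul_two_pow_add 1 hp

lemma thueMorse_two_pow_sub_one (d : ℕ) : thueMorse (2 ^ d - 1) = decide (Odd d) := by
  induction d with
  | zero => simp
  | succ d ih =>
    have : 2 ^ (d + 1) - 1 = 2 * (2 ^ d - 1) + 1 := by
      have := Nat.one_le_two_pow (n := d)
      rw [pow_succ]; omega
    simp [this, ih, ← Nat.not_even_iff_odd, Nat.even_add_one]

lemma thueMorse_two_pow_mul_sub_one {d q : ℕ} (hd : Odd d) (hq : Odd q) :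
    thueMorse (2 ^ d * q - 1) = thueMorse q := by
  obtain ⟨t, rfl⟩ := hq
  have hone := Nat.one_le_two_pow (n := d)
  rw [show 2 ^ d * (2 * t + 1) - 1 = 2 * t * 2 ^ d + (2 ^ d - 1) by
      rw [mul_add, mul_comm]; omega,
    thueMorse_mul_two_pow_add _ (by omega), thueMorse_two_pow_sub_one, thueMorse_two_mul,
    thueMorse_two_mul_add_one]
  simp [hd]

lemma morseBlock_eq_map_range (i : ℕ) : morseBlock i = (List.range (2 ^ i)).map thueMorse := by
  induction i with
  | zero => rfl
  | succ i ih =>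
    rw [morseBlock, ih, wordCompl, pow_succ, mul_two, List.range_add, List.map_append,
      List.map_map, List.map_map]
    congr 1
    refine List.map_congr_left fun p hp => ?_
    simp [thueMorse_two_pow_add (List.mem_range.mp hp)]

lemma length_morseBlock (i : ℕ) : (morseBlock i).length = 2 ^ i := by
  simp [morseBlock_eq_map_range]

lemma morse_eq_thueMorse : morse = thueMorse := by
  funext n
  have hn : n < 2 ^ (n + 1) :=
    n.lt_two_pow_self.trans (Nat.pow_lt_pow_right one_lt_two n.lt_succ_self)
  simp [morse, morseBlock_eq_map_range, hn]

lemma shift_iterate_apply (r : ℕ) (u : ℕ → Bool) (k : ℕ) : shift^[r] u k = u (k + r) := by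
  induction r generalizing u with
  | zero => rfl
  | succ r ih => rw [Function.iterate_succ_apply, ih, shift, add_assoc, add_comm r]

def OccursAt {α : Type*} (u : ℕ → α) (r : ℕ) (w : List α) : Prop :=
  ∀ k (hk : k < w.length), u (r + k) = w[k]

section OccursAt

variable {α : Type*} {u : ℕ → α} {r : ℕ}

lemma OccursAt.append {v w : List α} (hv : OccursAt u r v) (hw : OccursAt u (r + v.length) w) :
    OccursAt u r (v ++ w) := by
  intro k hk
  rw [List.getElem_append]
  split_ifs with hkv
  · exact hv k hkv
  · rw [← hw (k - v.length) (by simp at hk; omega)]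
    congr 1
    omega

lemma length_flatten_map_range (w : ℕ → List α) (n : ℕ) :
    ((List.range n).map w).flatten.length = ∑ i ∈ range n, (w i).length := by
  induction n with
  | zero => simp
  | succ n ih => simp [List.range_succ, sum_range_succ, ih]

lemma occursAt_flatten_map_range (w : ℕ → List α) (n : ℕ)
    (h : ∀ j < n, OccursAt u (r + ∑ i ∈ range j, (w i).length) (w j)) :
    OccursAt u r ((List.range n).map w).flatten := by
  induction n with
  | zero => simp [OccursAt]
  | succ n ih =>
    rw [List.range_succ, List.map_append, List.flatten_append, List.map_singleton,
      List.flatten_singleton]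
    refine (ih fun j hj => h j (by omega)).append ?_
    rw [length_flatten_map_range]
    exact h n n.lt_succ_self

end OccursAt

lemma occursAt_thueMorse_morseBlock {q : ℕ} (hq : thueMorse q = false) (i : ℕ) :
    OccursAt thueMorse (q * 2 ^ i) (morseBlock i) := by
  intro k hk
  have hk' : k < 2 ^ i := by simpa [morseBlock_eq_map_range] using hk
  simp [morseBlock_eq_map_range, thueMorse_mul_two_pow_add q hk', hq]

lemma odd_sub_of_strictMono_of_mod_two {a : ℕ → ℕ} (hmono : StrictMono a)
    (hpar : ∀ n, a n % 2 = (n + 1) % 2) (j : ℕ) : Odd (a (j + 1) - a j) := by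
  have := hmono (Nat.lt_add_one j)
  have := hpar j
  have := hpar (j + 1)
  rw [Nat.odd_iff]
  omega

lemma exists_odd_thueMorse_eq_false_of_odd_gaps {a : ℕ → ℕ}
    (hgap : ∀ j, Odd (a (j + 1) - a j)) {N j : ℕ} (hj : j ≤ N) :
    ∃ q, Odd q ∧ thueMorse q = false ∧
      q * 2 ^ a j + ∑ i ∈ Ico j N, 2 ^ a i = 3 * 2 ^ a N := by
  induction hj using Nat.decreasingInduction with
  | self => exact ⟨3, by decide, by decide, by simp⟩
  | of_succ j hj ih =>
    obtain ⟨q, hq, hqtm, hsum⟩ := ih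
    have hd := hgap j
    have hlt : a j < a (j + 1) := by obtain ⟨c, hc⟩ := hd; omega
    have hD : 1 ≤ 2 ^ (a (j + 1) - a j) * q := Nat.mul_le_mul Nat.one_le_two_pow hq.pos
    refine ⟨2 ^ (a (j + 1) - a j) * q - 1, ?_,
      by rw [thueMorse_two_pow_mul_sub_one hd hq, hqtm], ?_⟩
    · exact Nat.Even.sub_odd hD ((Nat.even_pow.mpr ⟨even_two, hd.pos.ne'⟩).mul_right q) odd_one
    · rw [sum_eq_sum_Ico_succ_bot hj, ← hsum, ← add_assoc, ← Nat.succ_mul,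
        Nat.succ_eq_add_one, Nat.sub_add_cancel hD, mul_right_comm, ← pow_add,
        Nat.sub_add_cancel hlt.le, mul_comm]

lemma exists_thueMorse_eq_false_of_odd_gaps {a : ℕ → ℕ} (hgap : ∀ j, Odd (a (j + 1) - a j))
    {N j : ℕ} (hj : j ≤ N) :
    ∃ q, thueMorse q = false ∧
      3 * 2 ^ a N - ∑ i ∈ range N, 2 ^ a i + ∑ i ∈ range j, 2 ^ a i = q * 2 ^ a j := by
  obtain ⟨_, -, -, hsum₀⟩ := exists_odd_thueMorse_eq_false_of_odd_gaps hgap (Nat.zero_le N)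
  obtain ⟨q, -, hq, hsum⟩ := exists_odd_thueMorse_eq_false_of_odd_gaps hgap hj
  refine ⟨q, hq, ?_⟩
  have hsplit := sum_range_add_sum_Ico (fun i => 2 ^ a i) hj
  rw [← range_eq_Ico] at hsum₀
  omega

theorem stmt3_general (a : ℕ → ℕ) (hmono : StrictMono a)
    (hpar : ∀ n, a n % 2 = (n + 1) % 2) (n : ℕ) :
    ∀ k < (((List.range n).map (fun i => morseBlock (a i))).flatten).length,
      shift^[3 * 2 ^ (a (n - 1)) - ∑ i ∈ Finset.range (n - 1), 2 ^ (a i)] morse k =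
        (((List.range n).map (fun i => morseBlock (a i))).flatten).getD k false := by
  intro k hk
  rw [shift_iterate_apply, morse_eq_thueMorse, List.getD_eq_getElem _ _ hk, add_comm]
  refine occursAt_flatten_map_range _ n (fun j hj => ?_) k hk
  obtain ⟨q, hq, hstart⟩ := exists_thueMorse_eq_false_of_odd_gaps
    (odd_sub_of_strictMono_of_mod_two hmono hpar) (show j ≤ n - 1 by omega)
  simp only [length_morseBlock, hstart]
  exact occursAt_thueMorse_morseBlock hq (a j)

theorem stmt3 (a : ℕ → ℕ) (hmono : StrictMono a) (hpos : ∀ n, 0 < a n)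
    (hpar : ∀ n, a n % 2 = (n + 1) % 2) (n : ℕ) (hn : 2 ≤ n) :
    ∀ k < (((List.range n).map (fun i => morseBlock (a i))).flatten).length,
      shift^[3 * 2 ^ (a (n - 1)) - ∑ i ∈ Finset.range (n - 1), 2 ^ (a i)] morse k =
        (((List.range n).map (fun i => morseBlock (a i))).flatten).getD k false :=
  stmt3_general a hmono hpar n
end

section
/- If {a_n} is an increasing sequence of positive integers with lim_{n→∞} a_n / a_{n+1} = 0, then lim_{n→∞} (Σ_{i=1}^{n−1} 2^{a_i}) / 2^{a_n} = 0. -/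
open Filter

/-! The sum of `2 ^ a i` over `i ≤ n` is less than `2 ^ (a n + 1)`, being a sum of distinct powers
of two below that one, so the quotient at index `n + 1` is at most `2 / 2 ^ (a (n + 1) - a n)`.
Since `a n < a (n + 1) / 2` eventually, the gaps `a (n + 1) - a n` tend to infinity. -/

open Finset

theorem sum_range_succ_two_pow_lt {a : ℕ → ℕ} (ha : StrictMono a) (n : ℕ) :
    ∑ i ∈ range (n + 1), 2 ^ a i < 2 ^ (a n + 1) := by
  rw [← sum_image ha.injective.injOn]
  refine Nat.geomSum_lt le_rfl fun k hk => ?_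
  obtain ⟨i, hi, rfl⟩ := mem_image.mp hk
  exact Nat.lt_succ_of_le (ha.monotone (Nat.le_of_lt_succ (mem_range.mp hi)))

theorem sum_range_succ_two_pow_div_le {a : ℕ → ℕ} (ha : StrictMono a) (n : ℕ) :
    (∑ i ∈ range (n + 1), (2 : ℝ) ^ a i) / 2 ^ a (n + 1) ≤ 2 / 2 ^ (a (n + 1) - a n) := by
  rw [pow_sub₀ _ two_ne_zero (ha (Nat.lt_succ_self n)).le, div_le_iff₀ (by positivity)]
  calc ∑ i ∈ range (n + 1), (2 : ℝ) ^ a i ≤ 2 ^ (a n + 1) := by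
        exact_mod_cast (sum_range_succ_two_pow_lt ha n).le
    _ = 2 / (2 ^ a (n + 1) * (2 ^ a n)⁻¹) * 2 ^ a (n + 1) := by field_simp; ring

theorem tendsto_sub_atTop_of_tendsto_div_succ {a : ℕ → ℕ} (ha : Tendsto a atTop atTop)
    (hratio : Tendsto (fun n => (a n : ℝ) / a (n + 1)) atTop (nhds 0)) :
    Tendsto (fun n => a (n + 1) - a n) atTop atTop := by
  have ha' : Tendsto (fun n => a (n + 1)) atTop atTop := (tendsto_add_atTop_iff_nat 1).mpr ha
  have hdouble : ∀ᶠ n in atTop, 2 * a n < a (n + 1) := by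
    filter_upwards [hratio.eventually (gt_mem_nhds one_half_pos),
      ha'.eventually_gt_atTop 0] with n hn hpos
    rw [div_lt_iff₀ (by exact_mod_cast hpos)] at hn
    exact_mod_cast (by linarith : (2 * a n : ℝ) < a (n + 1))
  refine tendsto_atTop_atTop.mpr fun b => ?_
  obtain ⟨N, hN⟩ := eventually_atTop.mp
    (hdouble.and (ha'.eventually_ge_atTop (2 * b)))
  exact ⟨N, fun n hn => by have := hN n hn; omega⟩

theorem stmt4_general (a : ℕ → ℕ) (hmono : StrictMono a)
    (hratio : Tendsto (fun n => (a n : ℝ) / (a (n + 1) : ℝ)) atTop (nhds 0)) :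
    Tendsto (fun n => (∑ i ∈ Finset.range n, (2 : ℝ) ^ (a i)) / 2 ^ (a n)) atTop (nhds 0) := by
  have hgap := tendsto_sub_atTop_of_tendsto_div_succ hmono.tendsto_atTop hratio
  have hbound : Tendsto (fun n => (2 : ℝ) / 2 ^ (a (n + 1) - a n)) atTop (nhds 0) :=
    tendsto_const_nhds.div_atTop ((tendsto_pow_atTop_atTop_of_one_lt one_lt_two).comp hgap)
  rw [← tendsto_add_atTop_iff_nat 1]
  exact squeeze_zero (fun n => by positivity) (sum_range_succ_two_pow_div_le hmono) hbound

theorem stmt4 (a : ℕ → ℕ) (hmono : StrictMono a) (hpos : ∀ n, 0 < a n)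
    (hratio : Tendsto (fun n => (a n : ℝ) / (a (n + 1) : ℝ)) atTop (nhds 0)) :
    Tendsto (fun n => (∑ i ∈ Finset.range n, (2 : ℝ) ^ (a i)) / 2 ^ (a n)) atTop (nhds 0) :=
  stmt4_general a hmono hratio
end

section
/- The Morse sequence m contains no block of the form BBb, where B is any nonempty finite word occurring in m and b is the first symbol of B. In particular, m contains no cube BBB. -/
open Filter

/-- The word `L` occurs in the Morse sequence at position `p`. -/
def occursAt (L : List Bool) (p : ℕ) : Prop :=
  ∀ k < L.length, morse (p + k) = L.getD k false

/-! Unfolding the block recursion along binary expansions gives `m (2n) = m n` and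
`m (2n+1) = ¬ m n`. Hence an equal adjacent pair `m j = m (j+1)` forces `j` odd, no symbol
occurs three times in a row, and every window of five symbols contains an equal adjacent pair.
An occurrence of `B B b` at `p` is an overlap `m (p+i) = m (p+n+i)` for `i ≤ n = |B|`. For even
`n` it descends to an overlap of period `n/2` at `p/2`; for odd `n` an equal adjacent pair near `p`
is copied `n` places to the right, giving two odd positions at odd distance. A cube `B B B`
begins with `B B b`. -/

lemma morseBlock_length (k : ℕ) : (morseBlock k).length = 2 ^ k := by
  induction k with
  | zero => rfl
  | succ k ih => simp [morseBlock, wordCompl, ih, pow_succ, mul_two]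

lemma morseBlock_prefix_of_le {k l : ℕ} (hkl : k ≤ l) : morseBlock k <+: morseBlock l := by
  induction l, hkl using Nat.le_induction with
  | base => exact List.prefix_refl _
  | succ l _ ih => exact ih.trans (List.prefix_append _ _)

lemma morseBlock_getD_of_le {k l n : ℕ} (hkl : k ≤ l) (hn : n < 2 ^ k) :
    (morseBlock k).getD n false = (morseBlock l).getD n false := by
  have hk : n < (morseBlock k).length := (morseBlock_length k).symm ▸ hn
  have hl : n < (morseBlock l).length := hk.trans_le (morseBlock_prefix_of_le hkl).length_le
  rw [List.getD_eq_getElem _ _ hk, List.getD_eq_getElem _ _ hl,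
    (morseBlock_prefix_of_le hkl).getElem]

lemma morseBlock_getD {k n : ℕ} (hn : n < 2 ^ k) : (morseBlock k).getD n false = morse n := by
  rcases le_total k (n + 1) with h | h
  · exact morseBlock_getD_of_le h hn
  · have : n < 2 ^ (n + 1) := Nat.lt_two_pow_self.trans (Nat.pow_lt_pow_succ one_lt_two)
    exact (morseBlock_getD_of_le h this).symm

lemma morse_two_pow_add {k r : ℕ} (hr : r < 2 ^ k) : morse (2 ^ k + r) = !morse r := by
  have hr' : r < (morseBlock k).length := (morseBlock_length k).symm ▸ hr
  rw [← morseBlock_getD (k := k + 1) (by rw [pow_succ]; omega), ← morseBlock_getD hr,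
    morseBlock,
    List.getD_append_right _ _ _ _ (by rw [morseBlock_length]; omega), morseBlock_length,
    Nat.add_sub_cancel_left,
    List.getD_eq_getElem _ _ (by simpa [wordCompl] using hr'), List.getD_eq_getElem _ _ hr']
  simp [wordCompl]

lemma exists_eq_two_pow_add {n : ℕ} (hn : n ≠ 0) : ∃ k r, r < 2 ^ k ∧ n = 2 ^ k + r := by
  refine ⟨Nat.log 2 n, n - 2 ^ Nat.log 2 n, ?_, ?_⟩
  · have := Nat.lt_pow_succ_log_self one_lt_two n
    rw [pow_succ] at this
    omega
  · have := Nat.pow_log_le_self 2 hn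
    omega

lemma morse_two_mul (n : ℕ) : morse (2 * n) = morse n := by
  induction n using Nat.strong_induction_on with
  | _ n ih =>
    rcases eq_or_ne n 0 with rfl | hn
    · rfl
    obtain ⟨k, r, hr, rfl⟩ := exists_eq_two_pow_add hn
    rw [show 2 * (2 ^ k + r) = 2 ^ (k + 1) + 2 * r by ring,
      morse_two_pow_add (by rw [pow_succ]; omega),
      ih r (Nat.lt_add_of_pos_left (Nat.two_pow_pos k)),
      morse_two_pow_add hr]

lemma morse_two_mul_add_one (n : ℕ) : morse (2 * n + 1) = !morse n := by
  induction n using Nat.strong_induction_on with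
  | _ n ih =>
    rcases eq_or_ne n 0 with rfl | hn
    · exact morse_two_pow_add (k := 0) one_pos
    obtain ⟨k, r, hr, rfl⟩ := exists_eq_two_pow_add hn
    rw [show 2 * (2 ^ k + r) + 1 = 2 ^ (k + 1) + (2 * r + 1) by ring,
      morse_two_pow_add (by rw [pow_succ]; omega),
      ih r (Nat.lt_add_of_pos_left (Nat.two_pow_pos k)),
      morse_two_pow_add hr]

lemma odd_of_morse_eq_morse_succ {j : ℕ} (h : morse j = morse (j + 1)) : Odd j := by
  rcases Nat.even_or_odd' j with ⟨m, rfl | rfl⟩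
  · rw [morse_two_mul, morse_two_mul_add_one] at h
    cases hm : morse m <;> simp [hm] at h
  · exact odd_two_mul_add_one m

lemma morse_succ_ne_of_eq {m : ℕ} (h : morse m = morse (m + 1)) :
    morse (m + 1) ≠ morse (m + 2) :=
  fun h' => by
    have := odd_of_morse_eq_morse_succ h
    have := odd_of_morse_eq_morse_succ h'
    grind

lemma morse_two_mul_add_one_eq_succ_iff (q : ℕ) :
    morse (2 * q + 1) = morse (2 * q + 2) ↔ morse q ≠ morse (q + 1) := by
  rw [morse_two_mul_add_one, show 2 * q + 2 = 2 * (q + 1) by ring, morse_two_mul]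
  cases morse q <;> cases morse (q + 1) <;> simp

lemma exists_morse_eq_morse_succ (j : ℕ) : ∃ i ≤ 3, morse (j + i) = morse (j + i + 1) := by
  obtain ⟨q, hq⟩ : ∃ q, j = 2 * q ∨ j = 2 * q + 1 := Nat.even_or_odd' j
  by_cases h : morse q = morse (q + 1)
  · refine ⟨2 * q + 3 - j, by omega, ?_⟩
    rw [show j + (2 * q + 3 - j) = 2 * (q + 1) + 1 by omega]
    exact (morse_two_mul_add_one_eq_succ_iff (q + 1)).2 (morse_succ_ne_of_eq h)
  · refine ⟨2 * q + 1 - j, by omega, ?_⟩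
    rw [show j + (2 * q + 1 - j) = 2 * q + 1 by omega]
    exact (morse_two_mul_add_one_eq_succ_iff q).2 h

theorem morse_not_overlap {n : ℕ} (hn : 0 < n) (p : ℕ) :
    ¬ ∀ i ≤ n, morse (p + i) = morse (p + n + i) := by
  induction n using Nat.strong_induction_on generalizing p with
  | _ n ih =>
    intro per
    rcases Nat.even_or_odd' n with ⟨m, rfl | rfl⟩
    · refine ih m (by omega) (by omega) (p / 2) fun i hi => ?_
      have h := per (2 * i) (by omega)
      rcases Nat.even_or_odd' p with ⟨q, rfl | rfl⟩
      · rw [show 2 * q / 2 = q by omega]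
        rwa [show 2 * q + 2 * i = 2 * (q + i) by ring, morse_two_mul,
          show 2 * q + 2 * m + 2 * i = 2 * (q + m + i) by ring, morse_two_mul] at h
      · rw [show (2 * q + 1) / 2 = q by omega]
        rwa [show 2 * q + 1 + 2 * i = 2 * (q + i) + 1 by ring, morse_two_mul_add_one,
          show 2 * q + 1 + 2 * m + 2 * i = 2 * (q + m + i) + 1 by ring, morse_two_mul_add_one,
          Bool.not_inj_iff] at h
    · have no_pairs_at_odd_distance : ∀ a,
          morse a = morse (a + 1) → ¬ morse (a + (2 * m + 1)) = morse (a + (2 * m + 1) + 1) :=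
        fun a h h' => by
          have := odd_of_morse_eq_morse_succ h
          have := odd_of_morse_eq_morse_succ h'
          grind
      rcases Nat.eq_zero_or_pos m with rfl | hm
      · exact morse_succ_ne_of_eq (per 0 (by omega)) (per 1 le_rfl)
      obtain ⟨i, hi, hpair⟩ := exists_morse_eq_morse_succ p
      rcases lt_or_eq_of_le (show i ≤ 2 * m + 1 by omega) with hin | rfl
      · refine no_pairs_at_odd_distance (p + i) hpair ?_
        rw [show p + i + (2 * m + 1) = p + (2 * m + 1) + i by ring, ← per i hin.le, hpair,
          add_assoc p i, per (i + 1) hin, add_assoc _ i]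
      · refine no_pairs_at_odd_distance p ?_ hpair
        have e0 : morse p = morse (p + (2 * m + 1)) := per 0 (by omega)
        have e1 : morse (p + 1) = morse (p + (2 * m + 1) + 1) := per 1 (by omega)
        rw [e0, e1]
        exact hpair

lemma occursAt_append {X Y : List Bool} {p : ℕ} :
    occursAt (X ++ Y) p ↔ occursAt X p ∧ occursAt Y (p + X.length) := by
  constructor
  · intro h
    refine ⟨fun k hk => ?_, fun k hk => ?_⟩
    · rw [h k (by simp; omega), List.getD_append _ _ _ _ hk]
    · rw [add_assoc, h _ (by simp; omega), List.getD_append_right _ _ _ _ (by omega),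
        Nat.add_sub_cancel_left]
  · rintro ⟨hX, hY⟩ k hk
    by_cases hkX : k < X.length
    · rw [hX k hkX, List.getD_append _ _ _ _ hkX]
    · obtain ⟨j, rfl⟩ := Nat.exists_eq_add_of_le (not_lt.1 hkX)
      rw [← add_assoc, hY j (by simp at hk; omega), List.getD_append_right _ _ _ _ (by omega),
        Nat.add_sub_cancel_left]

lemma occursAt.morse_add_eq {W : List Bool} {p q k : ℕ} (hp : occursAt W p) (hq : occursAt W q)
    (hk : k < W.length) : morse (p + k) = morse (q + k) :=
  (hp k hk).trans (hq k hk).symm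

theorem not_occursAt_append_append_head {B : List Bool} {b : Bool} (hb : B.head? = some b)
    (p : ℕ) : ¬ occursAt (B ++ B ++ [b]) p := by
  obtain ⟨t, rfl⟩ : ∃ t, B = b :: t := List.head?_eq_some_iff.1 hb
  intro h
  have h₁ : occursAt (b :: t ++ [b]) p :=
    (occursAt_append.1 (show occursAt ((b :: t ++ [b]) ++ (t ++ [b])) p by simpa using h)).1
  have h₂ : occursAt (b :: t ++ [b]) (p + (t.length + 1)) :=
    (occursAt_append.1 (show occursAt (b :: t ++ (b :: t ++ [b])) p by simpa using h)).2
  exact morse_not_overlap t.length.succ_pos p fun i hi => h₁.morse_add_eq h₂ (by simp; omega)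

theorem stmt8 :
    (∀ (B : List Bool) (b : Bool), B ≠ [] → B.head? = some b →
      ¬ ∃ p, occursAt (B ++ B ++ [b]) p) ∧
    (∀ B : List Bool, B ≠ [] → ¬ ∃ p, occursAt (B ++ B ++ B) p) := by
  refine ⟨fun B b _ hb ⟨p, h⟩ => not_occursAt_append_append_head hb p h, ?_⟩
  rintro (_ | ⟨b, t⟩) hB ⟨p, h⟩
  · exact hB rfl
  · have h' : occursAt ((b :: t ++ b :: t ++ [b]) ++ t) p := by simpa using h
    exact not_occursAt_append_append_head rfl p (occursAt_append.1 h').1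
end
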